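/- arXiv:2304.05185 — 4 statements merged into one kernel-verified Lean document; each statement's English description precedes it below -/
import Mathlib

section
/- Let (X,d) be a compact metric space, c > 0 an isolated local minimum value of d, and suppose the set M_c of pairs (x,y) with d(x,y) = c at which d attains a local minimum consists of a single pair {(x,y)}. Suppose there exists z ∈ X \ {x, y} with d(z,x) ≤ c and d(z,y) ≤ c. Then for every 1-cycle α in Rips(X, r) with r slightly larger than c, the homology class [α] has a representative all of whose edges have length strictly less than c; hence c is not an emergent critical value of H₁ of the open Rips filtration. Specifically: every occurrence of the edge ⟨x,y⟩ in a cycle can be replaced via the boundary of the 2-simplex ⟨x,z,y⟩, and every other edge of length exactly c or in [c,r) can be shortened by descent since it is not a local minimum of d. -/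
/-!
Call an edge of `Rips(X, r)` bad if it is not homologous, at scale `r`, to a chain of edges
shorter than `c`; it suffices to show there are no bad edges. Moving both endpoints of an edge
slightly changes it only by two short edges and the boundaries of two small triangles. Hence,
by compactness of `X × X`, a shortest bad edge exists, and it is a local minimum of `d`:
otherwise a nearby strictly shorter edge would be bad too. Its length lies in `[c, r)`, so by
isolation it is `c` and the edge is `(x, y)` or `(y, x)`. Through the triangle `x z y` one of
the legs at `z` is then bad; being no longer than `c` it is also a shortest bad edge, hence
`(x, y)` or `(y, x)` as well, which is absurd since `z ∉ {x, y}`.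
-/

/-- The simplicial boundary of a `1`-chain with coefficients in `G`. -/
noncomputable def bd1 {V : Type*} (G : Type*) [AddCommGroup G] (c : (V × V) →₀ G) :
    V →₀ G :=
  c.sum fun p g => Finsupp.single p.2 g - Finsupp.single p.1 g

/-- The simplicial boundary of a `2`-chain with coefficients in `G`. -/
noncomputable def bd2 {V : Type*} (G : Type*) [AddCommGroup G] (w : (V × V × V) →₀ G) :
    (V × V) →₀ G :=
  w.sum fun t g =>
    Finsupp.single (t.2.1, t.2.2) g - Finsupp.single (t.1, t.2.2) g +
      Finsupp.single (t.1, t.2.1) g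

/-- A `1`-cycle in the open Rips complex of `X` at scale `r`: a `1`-chain supported on
pairs at distance `< r` with vanishing boundary. -/
def IsRipsCycle {X : Type*} [MetricSpace X] {G : Type*} [AddCommGroup G] (r : ℝ)
    (c : (X × X) →₀ G) : Prop :=
  (∀ p ∈ c.support, dist p.1 p.2 < r) ∧ bd1 G c = 0

/-- Two `1`-chains are homologous in the open Rips complex at scale `r` if their
difference is the boundary of a `2`-chain supported on triples of diameter `< r`. -/
def RipsHomologous {X : Type*} [MetricSpace X] (G : Type*) [AddCommGroup G] (r : ℝ)
    (c c' : (X × X) →₀ G) : Prop :=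
  ∃ w : (X × X × X) →₀ G,
    (∀ t ∈ w.support,
      dist t.1 t.2.1 < r ∧ dist t.1 t.2.2 < r ∧ dist t.2.1 t.2.2 < r) ∧
    c - c' = bd2 G w

/-- The distance function of `X` attains a local minimum at the pair `(x, y)`. -/
def LocMinPair {X : Type*} [MetricSpace X] (x y : X) : Prop :=
  ∃ ε > 0, ∀ x' y' : X, dist x x' < ε → dist y y' < ε → dist x y ≤ dist x' y'

/-- `m` is a local minimum value of the distance function of `X`. -/
def IsLocMinVal (X : Type*) [MetricSpace X] (m : ℝ) : Prop :=
  ∃ a b : X, dist a b = m ∧ LocMinPair a b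

namespace Rips

section Boundary

variable (V G : Type*) [AddCommGroup G]

noncomputable def bd1Hom : ((V × V) →₀ G) →+ (V →₀ G) where
  toFun := bd1 G
  map_zero' := Finsupp.sum_zero_index
  map_add' _ _ := Finsupp.sum_add_index' (fun _ => by simp) fun _ _ _ => by
    simp only [Finsupp.single_add]; abel

noncomputable def bd2Hom : ((V × V × V) →₀ G) →+ ((V × V) →₀ G) where
  toFun := bd2 G
  map_zero' := Finsupp.sum_zero_index
  map_add' _ _ := Finsupp.sum_add_index' (fun _ => by simp) fun _ _ _ => by
    simp only [Finsupp.single_add]; abel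

variable {V G}

@[simp] lemma bd1Hom_apply (c : (V × V) →₀ G) : bd1Hom V G c = bd1 G c := rfl

@[simp] lemma bd2Hom_apply (w : (V × V × V) →₀ G) : bd2Hom V G w = bd2 G w := rfl

lemma bd1_single (p : V × V) (g : G) :
    bd1 G (Finsupp.single p g) = Finsupp.single p.2 g - Finsupp.single p.1 g :=
  Finsupp.sum_single_index (by simp)

lemma bd2_single (t : V × V × V) (g : G) :
    bd2 G (Finsupp.single t g) =
      Finsupp.single (t.2.1, t.2.2) g - Finsupp.single (t.1, t.2.2) g +
        Finsupp.single (t.1, t.2.1) g :=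
  Finsupp.sum_single_index (by simp)

lemma bd1_bd2 (w : (V × V × V) →₀ G) : bd1 G (bd2 G w) = 0 := by
  suffices (bd1Hom V G).comp (bd2Hom V G) = 0 from DFunLike.congr_fun this w
  refine Finsupp.addHom_ext fun t g => ?_
  rw [AddMonoidHom.comp_apply, bd2Hom_apply, bd2_single, map_add, map_sub]
  simp only [bd1Hom_apply, bd1_single, AddMonoidHom.zero_apply]
  abel

end Boundary

section ShortModBoundaries

variable {X : Type*} [MetricSpace X] (G : Type*) [AddCommGroup G]

def smallTriangles (r : ℝ) : Set (X × X × X) :=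
  {t | dist t.1 t.2.1 < r ∧ dist t.1 t.2.2 < r ∧ dist t.2.1 t.2.2 < r}

noncomputable def shortModBoundaries (c r : ℝ) : AddSubgroup ((X × X) →₀ G) :=
  (Finsupp.supported G ℤ {p : X × X | dist p.1 p.2 < c}).toAddSubgroup ⊔
    (Finsupp.supported G ℤ (smallTriangles r)).toAddSubgroup.map (bd2Hom X G)

variable {G}

lemma exists_short_ripsHomologous {c r : ℝ} (hcr : c ≤ r) {α : (X × X) →₀ G}
    (hα : IsRipsCycle r α) (hmem : α ∈ shortModBoundaries G c r) :
    ∃ α' : (X × X) →₀ G, RipsHomologous G r α α' ∧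
      (∀ p ∈ α'.support, dist p.1 p.2 < c) ∧ IsRipsCycle r α' := by
  obtain ⟨β, hβ, _, ⟨w, hw, rfl⟩, rfl⟩ := AddSubgroup.mem_sup.1 hmem
  have hshort : ∀ p ∈ β.support, dist p.1 p.2 < c := fun p hp =>
    (Finsupp.mem_supported ℤ _).1 hβ hp
  refine ⟨β, ⟨w, fun t ht => (Finsupp.mem_supported ℤ _).1 hw ht, by simp⟩, hshort,
    fun p hp => (hshort p hp).trans_le hcr, ?_⟩
  have hbd := hα.2
  rw [← bd1Hom_apply, map_add] at hbd
  simpa [bd1_bd2] using hbd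

variable {c r : ℝ}

lemma single_mem_of_dist_lt {p : X × X} (hp : dist p.1 p.2 < c) (g : G) :
    Finsupp.single p g ∈ shortModBoundaries G c r :=
  AddSubgroup.mem_sup_left (Finsupp.single_mem_supported ℤ g hp)

lemma single_mem_of_triangle {u v w : X} (huv : dist u v < r) (huw : dist u w < r)
    (hvw : dist v w < r) {g : G} (h₁ : Finsupp.single (u, v) g ∈ shortModBoundaries G c r)
    (h₂ : Finsupp.single (v, w) g ∈ shortModBoundaries G c r) :
    Finsupp.single (u, w) g ∈ shortModBoundaries G c r := by
  have hbd : bd2 G (Finsupp.single (u, v, w) g) ∈ shortModBoundaries G c r :=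
    AddSubgroup.mem_sup_right
      ⟨_, Finsupp.single_mem_supported ℤ g (show (u, v, w) ∈ smallTriangles r from
        ⟨huv, huw, hvw⟩), rfl⟩
  rw [bd2_single] at hbd
  convert sub_mem (add_mem h₂ h₁) hbd using 1
  abel

lemma single_mem_of_near {a b a' b' : X} {s : ℝ} (hs : dist a' b' ≤ s)
    (ha : dist a a' < min c (r - s)) (hb : dist b b' < min c (r - s)) (hab : dist a b < r)
    {g : G} (h : Finsupp.single (a', b') g ∈ shortModBoundaries G c r) :
    Finsupp.single (a, b) g ∈ shortModBoundaries G c r := by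
  rw [lt_min_iff] at ha hb
  rw [dist_comm] at hb
  have ha'b : dist a' b < r := by linarith [dist_triangle a' b' b]
  have hb'b : dist b' b < r := by linarith [dist_nonneg (x := a') (y := b')]
  refine single_mem_of_triangle (by linarith [dist_nonneg (x := a') (y := b')]) hab ha'b
    (single_mem_of_dist_lt ha.1 g) ?_
  exact single_mem_of_triangle (by linarith [dist_nonneg (x := b') (y := b)]) ha'b hb'b h
    (single_mem_of_dist_lt hb.1 g)

def badEdges (c r : ℝ) (g : G) : Set (X × X) :=
  {p | dist p.1 p.2 < r ∧ Finsupp.single p g ∉ shortModBoundaries G c r}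

lemma le_dist_of_mem_badEdges {g : G} {p : X × X} (hp : p ∈ badEdges c r g) :
    c ≤ dist p.1 p.2 :=
  not_lt.1 fun h => hp.2 (single_mem_of_dist_lt h g)

lemma exists_isMinOn_badEdges [CompactSpace X] (hc : 0 < c) {g : G}
    (hne : (badEdges c r g : Set (X × X)).Nonempty) :
    ∃ p ∈ badEdges c r g, IsMinOn (fun p : X × X => dist p.1 p.2) (badEdges c r g) p := by
  obtain ⟨q, hq⟩ := hne
  obtain ⟨p, hp, hmin⟩ := isClosed_closure.isCompact.exists_isMinOn ⟨q, subset_closure hq⟩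
    (continuous_fst.dist continuous_snd).continuousOn
  have hmin' : IsMinOn (fun p : X × X => dist p.1 p.2) (badEdges c r g) p :=
    hmin.on_subset subset_closure
  have hpr : dist p.1 p.2 < r := (hmin' hq).trans_lt hq.1
  refine ⟨p, ⟨hpr, fun hmem => ?_⟩, hmin'⟩
  obtain ⟨p₀, hp₀, hpp₀⟩ := Metric.mem_closure_iff.1 hp _ (lt_min hc (sub_pos.2 hpr))
  rw [dist_comm, Prod.dist_eq, max_lt_iff] at hpp₀
  exact hp₀.2 (single_mem_of_near le_rfl hpp₀.1 hpp₀.2 hp₀.1 hmem)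

lemma locMinPair_of_isMinOn_badEdges (hc : 0 < c) {g : G} {p : X × X}
    (hp : p ∈ badEdges c r g)
    (hmin : IsMinOn (fun p : X × X => dist p.1 p.2) (badEdges c r g) p) :
    LocMinPair p.1 p.2 := by
  by_contra hloc
  simp only [LocMinPair, not_exists, not_and, not_forall, not_le, exists_prop] at hloc
  obtain ⟨a', b', ha, hb, hlt⟩ := hloc _ (lt_min hc (sub_pos.2 hp.1))
  have hbad : (a', b') ∈ badEdges c r g :=
    ⟨hlt.trans hp.1, fun hmem => hp.2 (single_mem_of_near hlt.le ha hb hp.1 hmem)⟩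
  exact absurd hlt (not_lt.2 (hmin hbad))

lemma eq_of_isMinOn_badEdges (hc : 0 < c) {x y : X} {ε : ℝ}
    (hiso : ∀ m ∈ Set.Ioo (c - ε) (c + ε), IsLocMinVal X m → m = c)
    (huniq : ∀ a b : X, LocMinPair a b → dist a b = c → (a = x ∧ b = y) ∨ (a = y ∧ b = x))
    (hcr : c < r) (hrε : r < c + ε) {g : G} {p : X × X} (hp : p ∈ badEdges c r g)
    (hmin : IsMinOn (fun p : X × X => dist p.1 p.2) (badEdges c r g) p) :
    dist p.1 p.2 = c ∧ (p.1 = x ∧ p.2 = y ∨ p.1 = y ∧ p.2 = x) := by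
  have hloc := locMinPair_of_isMinOn_badEdges hc hp hmin
  have hcp := le_dist_of_mem_badEdges hp
  have hpc : dist p.1 p.2 = c := hiso _ ⟨by linarith, by linarith [hp.1]⟩ ⟨_, _, rfl, hloc⟩
  exact ⟨hpc, huniq _ _ hloc hpc⟩

theorem single_mem_shortModBoundaries [CompactSpace X] (hc : 0 < c) {x y z : X} {ε : ℝ}
    (hiso : ∀ m ∈ Set.Ioo (c - ε) (c + ε), IsLocMinVal X m → m = c)
    (huniq : ∀ a b : X, LocMinPair a b → dist a b = c → (a = x ∧ b = y) ∨ (a = y ∧ b = x))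
    (hzx : z ≠ x) (hzy : z ≠ y) (hdzx : dist z x ≤ c) (hdzy : dist z y ≤ c)
    (hcr : c < r) (hrε : r < c + ε) {p : X × X} (hp : dist p.1 p.2 < r) (g : G) :
    Finsupp.single p g ∈ shortModBoundaries G c r := by
  by_contra hnot
  obtain ⟨⟨a, b⟩, hab, hmin⟩ := exists_isMinOn_badEdges hc ⟨p, hp, hnot⟩
  obtain ⟨habc, hxy⟩ := eq_of_isMinOn_badEdges hc hiso huniq hcr hrε hab hmin
  have hlegs : dist a z ≤ c ∧ dist z b ≤ c := by
    rcases hxy with ⟨rfl, rfl⟩ | ⟨rfl, rfl⟩ <;> rw [dist_comm] <;>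
      exact ⟨by assumption, by assumption⟩
  have good_leg : ∀ q : X × X, (q.1 = z ∨ q.2 = z) → dist q.1 q.2 ≤ c →
      Finsupp.single q g ∈ shortModBoundaries G c r := by
    rintro ⟨u, v⟩ hz hqc
    by_contra hq
    have hbad : (u, v) ∈ badEdges c r g := ⟨hqc.trans_lt hcr, hq⟩
    obtain ⟨-, huv⟩ := eq_of_isMinOn_badEdges hc hiso huniq hcr hrε hbad
      fun q' hq' => hqc.trans (habc ▸ hmin hq')
    rcases hz with rfl | rfl <;> tauto
  exact hab.2 (single_mem_of_triangle (hlegs.1.trans_lt hcr) hab.1 (hlegs.2.trans_lt hcr)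
    (good_leg (a, z) (Or.inr rfl) hlegs.1) (good_leg (z, b) (Or.inl rfl) hlegs.2))

end ShortModBoundaries

end Rips

theorem stmt_13_general {X : Type*} [MetricSpace X] [CompactSpace X] (G : Type*)
    [AddCommGroup G] (c : ℝ) (hc : 0 < c) (x y : X)
    (hiso : ∃ ε > 0, ∀ m ∈ Set.Ioo (c - ε) (c + ε), IsLocMinVal X m → m = c)
    (huniq : ∀ a b : X, LocMinPair a b → dist a b = c →
      (a = x ∧ b = y) ∨ (a = y ∧ b = x))
    (z : X) (hzx : z ≠ x) (hzy : z ≠ y) (hdzx : dist z x ≤ c) (hdzy : dist z y ≤ c) :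
    ∃ ε > 0, ∀ r : ℝ, c < r → r < c + ε → ∀ α : (X × X) →₀ G, IsRipsCycle r α →
      ∃ α' : (X × X) →₀ G, RipsHomologous G r α α' ∧
        (∀ p ∈ α'.support, dist p.1 p.2 < c) ∧ IsRipsCycle r α' := by
  obtain ⟨ε, hε, hiso⟩ := hiso
  refine ⟨ε, hε, fun r hcr hrε α hα => Rips.exists_short_ripsHomologous hcr.le hα ?_⟩
  rw [← α.sum_single]
  exact sum_mem fun p hp => Rips.single_mem_shortModBoundaries hc hiso huniq hzx hzy hdzx hdzy
    hcr hrε (hα.1 p hp) _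

/-- if `c > 0` is an isolated local minimum value of `d`, the only
local-minimum pair at distance `c` is `(x, y)` (up to order), and there is a point
`z ∉ {x, y}` with `d(z,x) ≤ c` and `d(z,y) ≤ c`, then for every scale `r` slightly
larger than `c`, every `1`-cycle of `Rips(X, r)` is homologous (at scale `r`) to a cycle
all of whose edges have length `< c`; hence `c` is not an emergent critical value of
`H₁`. -/
theorem stmt_13 {X : Type*} [MetricSpace X] [CompactSpace X] (G : Type*)
    [AddCommGroup G] (c : ℝ) (hc : 0 < c) (x y : X)
    (hxy : dist x y = c) (hmin : LocMinPair x y)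
    (hiso : ∃ ε > 0, ∀ m ∈ Set.Ioo (c - ε) (c + ε), IsLocMinVal X m → m = c)
    (huniq : ∀ a b : X, LocMinPair a b → dist a b = c →
      (a = x ∧ b = y) ∨ (a = y ∧ b = x))
    (z : X) (hzx : z ≠ x) (hzy : z ≠ y) (hdzx : dist z x ≤ c) (hdzy : dist z y ≤ c) :
    ∃ ε > 0, ∀ r : ℝ, c < r → r < c + ε → ∀ α : (X × X) →₀ G, IsRipsCycle r α →
      ∃ α' : (X × X) →₀ G, RipsHomologous G r α α' ∧
        (∀ p ∈ α'.support, dist p.1 p.2 < c) ∧ IsRipsCycle r α' :=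
  stmt_13_general G c hc x y hiso huniq z hzx hzy hdzx hdzy
end

section
/- Let (X,d) be a compact metric space, c > 0, and suppose (x,y) ∈ X² satisfies d(x,y) = c, d attains a strict local minimum at (x,y) in the sense that there is R with 0 < R < c/4 such that d(x', y') > c for all x' ∈ closed ball B̄(x,R) and y' ∈ B̄(y,R) with (x',y') ≠ (x,y). If moreover the set M_c of local-minimum pairs at distance c is finite, then there exist real numbers w₁ ≤ w₂ with c < w₁ such that for all x' ∈ B̄(x,R) \ B(x, R/2) and all y' ∈ B̄(y,R), one has d(x', y') ∈ [w₁, w₂], and symmetrically for x' ∈ B̄(x,R), y' ∈ B̄(y,R) \ B(y, R/2). Consequently there exists ε₀ > 0 such that whenever x' ∈ B̄(x,R), y' ∈ B̄(y,R), and c < d(x', y') < c + ε₀, then x' ∈ B(x, R/2) and y' ∈ B(y, R/2). -/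
/-- let `(x, y)` be a strict local minimum pair of `d` at value `c > 0`,
witnessed on closed balls of radius `R < c/4`, and suppose the set of local-minimum
pairs at distance `c` is finite.  Then distances from the annulus
`B̄(x,R) \ B(x,R/2)` to `B̄(y,R)` (and symmetrically) lie in a compact interval
`[w₁, w₂] ⊂ (c, ∞)`, and consequently there is `ε₀ > 0` such that any pair in the two
closed balls at distance in `(c, c + ε₀)` actually lies in the two open half-radius
balls. -/
theorem stmt_14 {X : Type*} [MetricSpace X] [CompactSpace X] (c : ℝ) (hc : 0 < c)
    (x y : X) (hdxy : dist x y = c) (R : ℝ) (hR0 : 0 < R) (hR : R < c / 4)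
    (hstrict : ∀ x' ∈ Metric.closedBall x R, ∀ y' ∈ Metric.closedBall y R,
      (x', y') ≠ (x, y) → c < dist x' y')
    (hMc : {p : X × X | LocMinPair p.1 p.2 ∧ dist p.1 p.2 = c}.Finite) :
    (∃ w₁ w₂ : ℝ, c < w₁ ∧ w₁ ≤ w₂ ∧
      (∀ x' ∈ Metric.closedBall x R \ Metric.ball x (R / 2),
        ∀ y' ∈ Metric.closedBall y R, dist x' y' ∈ Set.Icc w₁ w₂) ∧
      (∀ x' ∈ Metric.closedBall x R,
        ∀ y' ∈ Metric.closedBall y R \ Metric.ball y (R / 2),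
          dist x' y' ∈ Set.Icc w₁ w₂)) ∧
    ∃ ε₀ > 0, ∀ x' ∈ Metric.closedBall x R, ∀ y' ∈ Metric.closedBall y R,
      c < dist x' y' → dist x' y' < c + ε₀ →
        x' ∈ Metric.ball x (R / 2) ∧ y' ∈ Metric.ball y (R / 2) := by
  have hR2 : 0 < R / 2 := by linarith
  have hxball : x ∈ Metric.ball x (R / 2) := Metric.mem_ball_self hR2
  have hyball : y ∈ Metric.ball y (R / 2) := Metric.mem_ball_self hR2
  set K : Set (X × X) :=
    ((Metric.closedBall x R \ Metric.ball x (R / 2)) ×ˢ Metric.closedBall y R) ∪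
      (Metric.closedBall x R ×ˢ (Metric.closedBall y R \ Metric.ball y (R / 2))) with hK
  have hKclosed : IsClosed K := by
    apply IsClosed.union
    · exact (Metric.isClosed_closedBall.inter Metric.isOpen_ball.isClosed_compl).prod
        Metric.isClosed_closedBall
    · exact Metric.isClosed_closedBall.prod
        (Metric.isClosed_closedBall.inter Metric.isOpen_ball.isClosed_compl)
  have hKcompact : IsCompact K := hKclosed.isCompact
  have hKgt : ∀ p ∈ K, c < dist p.1 p.2 := by
    rintro ⟨a, b⟩ hp
    rcases hp with ⟨⟨ha1, ha2⟩, hb⟩ | ⟨ha, hb1, hb2⟩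
    · refine hstrict a ha1 b hb ?_
      intro h
      rw [Prod.mk.injEq] at h
      exact ha2 (h.1 ▸ hxball)
    · refine hstrict a ha b hb1 ?_
      intro h
      rw [Prod.mk.injEq] at h
      exact hb2 (h.2 ▸ hyball)
  have main : ∃ w₁ w₂ : ℝ, c < w₁ ∧ w₁ ≤ w₂ ∧
      (∀ x' ∈ Metric.closedBall x R \ Metric.ball x (R / 2),
        ∀ y' ∈ Metric.closedBall y R, dist x' y' ∈ Set.Icc w₁ w₂) ∧
      (∀ x' ∈ Metric.closedBall x R,
        ∀ y' ∈ Metric.closedBall y R \ Metric.ball y (R / 2),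
          dist x' y' ∈ Set.Icc w₁ w₂) := by
    rcases K.eq_empty_or_nonempty with hKe | hKne
    · refine ⟨c + 1, c + 1, by linarith, le_refl _, ?_, ?_⟩
      · intro x' hx' y' hy'
        exact absurd (show (x', y') ∈ K from Or.inl ⟨hx', hy'⟩) (by simp [hKe])
      · intro x' hx' y' hy'
        exact absurd (show (x', y') ∈ K from Or.inr ⟨hx', hy'⟩) (by simp [hKe])
    · obtain ⟨p₁, hp₁, hmin⟩ :=
        hKcompact.exists_isMinOn hKne continuous_dist.continuousOn
      obtain ⟨p₂, hp₂, hmax⟩ :=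
        hKcompact.exists_isMaxOn hKne continuous_dist.continuousOn
      refine ⟨dist p₁.1 p₁.2, dist p₂.1 p₂.2, hKgt p₁ hp₁, hmin hp₂, ?_, ?_⟩
      · intro x' hx' y' hy'
        have hmem : (x', y') ∈ K := Or.inl ⟨hx', hy'⟩
        exact ⟨hmin hmem, hmax hmem⟩
      · intro x' hx' y' hy'
        have hmem : (x', y') ∈ K := Or.inr ⟨hx', hy'⟩
        exact ⟨hmin hmem, hmax hmem⟩
  refine ⟨main, ?_⟩
  obtain ⟨w₁, w₂, hw1, _, h1, h2⟩ := main
  refine ⟨w₁ - c, by linarith, ?_⟩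
  intro x' hx' y' hy' hlt hlt'
  constructor
  · by_contra hxb
    have := (h1 x' ⟨hx', hxb⟩ y' hy').1
    linarith
  · by_contra hyb
    have := (h2 x' hx' y' ⟨hy', hyb⟩).1
    linarith
end

section
/- Let X ⊂ ℝ² be the union of the graphs of f(x) = 1 + 1/x and g(x) = −1 − 1/x for x > 0, with the Euclidean metric. Then the distance function d on X × X has no positive local minimum value (the only local minimum value of d is 0), yet inf{d(p,q) : p ∈ graph(f), q ∈ graph(g)} = 2 and this infimum is not attained. Consequently, for the relation ∼_r (finite chains with consecutive distances < r), the two graphs are in distinct classes for r ≤ 2 and the same class for r > 2, so the scale 2 is a critical value of zero-dimensional persistence not lying in LocMin(d). -/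
/-!
Both branches are graphs of monotone functions of `t > 0`. Sliding one point of a same-branch
pair towards the other shrinks both coordinate gaps, and shifting both points of a cross pair
`(t, 1 + 1/t)`, `(u, -1 - 1/u)` to the right by the same amount keeps the horizontal gap while the
vertical gap `2 + 1/t + 1/u` shrinks; so no pair at positive distance is a local minimum. That
vertical gap exceeds `2` but tends to `2`, which gives the infimum and separates the branches at
scales `s ≤ 2`. Each branch is connected, hence a single chain class at every scale, and for
`s > 2` the vertical segment of length `2 + 2/t < s` joins the two classes.
-/

open Set Filter Topology

section ChainRelation

variable {α : Type*} [PseudoMetricSpace α] {r : ℝ}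

theorem IsPreconnected.eqvGen_dist_lt {s : Set α} (hs : IsPreconnected s) (hr : 0 < r)
    {x y : α} (hx : x ∈ s) (hy : y ∈ s) :
    Relation.EqvGen (fun a b : α => dist a b < r) x y := by
  refine hs.induction₂ _ (fun x _ => ?_) (fun _ _ _ _ _ _ => .trans _ _ _)
    (fun _ _ _ _ => .symm _ _) hx hy
  filter_upwards [nhdsWithin_le_nhds (Metric.ball_mem_nhds x hr)] with y hy
  exact .rel _ _ (Metric.mem_ball'.mp hy)

theorem Relation.EqvGen.iff_of_le_dist {P : α → Prop}
    (hsep : ∀ a b, P a → ¬ P b → r ≤ dist a b) {a b : α}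
    (h : Relation.EqvGen (fun a b : α => dist a b < r) a b) : P a ↔ P b := by
  have hP : Equivalence fun a b : α => P a ↔ P b := ⟨fun _ => Iff.rfl, Iff.symm, Iff.trans⟩
  refine hP.eqvGen_iff.mp (Relation.EqvGen.mono (fun a b hab => ?_) a b h)
  constructor
  · intro ha
    by_contra hb
    linarith [hsep a b ha hb]
  · intro hb
    by_contra ha
    linarith [hsep b a hb ha, dist_comm a b]

end ChainRelation

section CloserPairs

variable {α : Type*} [MetricSpace α] {S : Set α} {p q : α}

def HasCloserPairsNearby (S : Set α) (p q : α) : Prop :=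
  ∀ ε > 0, ∃ p' ∈ S, ∃ q' ∈ S,
    dist p p' < ε ∧ dist q q' < ε ∧ dist p' q' < dist p q

theorem HasCloserPairsNearby.symm (h : HasCloserPairsNearby S p q) :
    HasCloserPairsNearby S q p := fun ε hε => by
  obtain ⟨p', hp', q', hq', hp, hq, hlt⟩ := h ε hε
  exact ⟨q', hq', p', hp', hq, hp, by rwa [dist_comm, dist_comm q]⟩

theorem HasCloserPairsNearby.not_locMinPair {x y : S} (h : HasCloserPairsNearby S x y) :
    ¬ LocMinPair x y := by
  rintro ⟨ε, hε, hmin⟩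
  obtain ⟨p', hp', q', hq', hp, hq, hlt⟩ := h ε hε
  exact (hmin ⟨p', hp'⟩ ⟨q', hq'⟩ hp hq).not_gt hlt

end CloserPairs

theorem EuclideanSpace.dist_vec2 (a b c d : ℝ) :
    dist !₂[a, b] !₂[c, d] = √((a - c) ^ 2 + (b - d) ^ 2) := by
  simp [EuclideanSpace.dist_eq, Fin.sum_univ_two, Real.dist_eq, sq_abs]

namespace HyperbolaBranches

noncomputable def upper (t : ℝ) : EuclideanSpace ℝ (Fin 2) := !₂[t, 1 + 1 / t]

noncomputable def lower (t : ℝ) : EuclideanSpace ℝ (Fin 2) := !₂[t, -1 - 1 / t]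

def upperBranch : Set (EuclideanSpace ℝ (Fin 2)) := {p | ∃ t : ℝ, 0 < t ∧ p = upper t}

def lowerBranch : Set (EuclideanSpace ℝ (Fin 2)) := {p | ∃ t : ℝ, 0 < t ∧ p = lower t}

theorem upper_mem {t : ℝ} (ht : 0 < t) : upper t ∈ upperBranch ∪ lowerBranch :=
  .inl ⟨t, ht, rfl⟩

theorem lower_mem {t : ℝ} (ht : 0 < t) : lower t ∈ upperBranch ∪ lowerBranch :=
  .inr ⟨t, ht, rfl⟩

theorem continuousAt_upper {t : ℝ} (ht : t ≠ 0) : ContinuousAt upper t := by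
  unfold upper
  fun_prop (disch := exact ht)

theorem continuousAt_lower {t : ℝ} (ht : t ≠ 0) : ContinuousAt lower t := by
  unfold lower
  fun_prop (disch := exact ht)

theorem dist_upper_upper (a b : ℝ) :
    dist (upper a) (upper b) = √((a - b) ^ 2 + (1 / a - 1 / b) ^ 2) := by
  rw [upper, upper, EuclideanSpace.dist_vec2]
  ring_nf

theorem dist_lower_lower (a b : ℝ) : dist (lower a) (lower b) = dist (upper a) (upper b) := by
  rw [dist_upper_upper, lower, lower, EuclideanSpace.dist_vec2]
  ring_nf

theorem dist_upper_lower (a b : ℝ) :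
    dist (upper a) (lower b) = √((a - b) ^ 2 + (2 + 1 / a + 1 / b) ^ 2) := by
  rw [upper, lower, EuclideanSpace.dist_vec2]
  ring_nf

theorem two_lt_dist_of_mem {p q : EuclideanSpace ℝ (Fin 2)} (hp : p ∈ upperBranch)
    (hq : q ∈ lowerBranch) : 2 < dist p q := by
  obtain ⟨t, ht, rfl⟩ := hp
  obtain ⟨u, hu, rfl⟩ := hq
  have hgap : 0 < 1 / t + 1 / u := by positivity
  calc (2 : ℝ) < 2 + 1 / t + 1 / u := by linarith
    _ = √((2 + 1 / t + 1 / u) ^ 2) := (Real.sqrt_sq (by positivity)).symm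
    _ ≤ dist (upper t) (lower u) := by
      rw [dist_upper_lower]
      exact Real.sqrt_le_sqrt (by nlinarith [sq_nonneg (t - u)])

theorem dist_upper_lower_self {t : ℝ} (ht : 0 < t) : dist (upper t) (lower t) = 2 + 2 / t := by
  rw [dist_upper_lower, sub_self, ← Real.sqrt_sq (by positivity : 0 ≤ 2 + 2 / t)]
  ring_nf

theorem exists_dist_upper_lower_lt {s : ℝ} (hs : 2 < s) :
    ∃ t > 0, dist (upper t) (lower t) < s := by
  have hs' : 0 < s - 2 := by linarith
  refine ⟨4 / (s - 2), by positivity, ?_⟩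
  rw [dist_upper_lower_self (by positivity), div_div_eq_mul_div]
  linarith [show 2 * (s - 2) / 4 = (s - 2) / 2 by ring]

theorem dist_upper_lt_of_lt_of_lt {t t' u : ℝ} (ht : 0 < t) (htt' : t < t') (ht'u : t' < u) :
    dist (upper t') (upper u) < dist (upper t) (upper u) := by
  rw [dist_upper_upper, dist_upper_upper]
  have hx : (t' - u) ^ 2 < (t - u) ^ 2 := by nlinarith
  have h1 : 1 / u < 1 / t' := one_div_lt_one_div_of_lt (ht.trans htt') ht'u
  have h2 : 1 / t' < 1 / t := one_div_lt_one_div_of_lt ht htt'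
  have hy : (1 / t' - 1 / u) ^ 2 ≤ (1 / t - 1 / u) ^ 2 := by nlinarith
  exact Real.sqrt_lt_sqrt (by positivity) (by linarith)

theorem dist_upper_lower_add_lt {t u h : ℝ} (ht : 0 < t) (hu : 0 < u) (hh : 0 < h) :
    dist (upper (t + h)) (lower (u + h)) < dist (upper t) (lower u) := by
  rw [dist_upper_lower, dist_upper_lower, add_sub_add_right_eq_sub]
  have h1 : 1 / (t + h) < 1 / t := one_div_lt_one_div_of_lt ht (by linarith)
  have h2 : 1 / (u + h) < 1 / u := one_div_lt_one_div_of_lt hu (by linarith)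
  have hy : (2 + 1 / (t + h) + 1 / (u + h)) ^ 2 < (2 + 1 / t + 1 / u) ^ 2 :=
    pow_lt_pow_left₀ (by linarith) (by positivity) two_ne_zero
  exact Real.sqrt_lt_sqrt (by positivity) (by linarith)

theorem exists_mem_Ioo_dist_upper_lt {t u ε : ℝ} (ht : 0 < t) (htu : t < u) (hε : 0 < ε) :
    ∃ t' ∈ Ioo t u, dist (upper t) (upper t') < ε := by
  have hnear := (continuousAt_upper ht.ne').eventually (Metric.ball_mem_nhds (upper t) hε)
  obtain ⟨t', hclose, ht'⟩ :=
    ((hnear.filter_mono nhdsWithin_le_nhds).and (Ioo_mem_nhdsGT htu)).exists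
  exact ⟨t', ht', Metric.mem_ball'.mp hclose⟩

theorem hasCloserPairsNearby_upper_upper {t u : ℝ} (ht : 0 < t) (htu : t < u) :
    HasCloserPairsNearby (upperBranch ∪ lowerBranch) (upper t) (upper u) := fun ε hε => by
  obtain ⟨t', ⟨htt', ht'u⟩, hclose⟩ := exists_mem_Ioo_dist_upper_lt ht htu hε
  exact ⟨upper t', upper_mem (ht.trans htt'), upper u, upper_mem (ht.trans htu), hclose,
    by rwa [dist_self], dist_upper_lt_of_lt_of_lt ht htt' ht'u⟩

theorem hasCloserPairsNearby_lower_lower {t u : ℝ} (ht : 0 < t) (htu : t < u) :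
    HasCloserPairsNearby (upperBranch ∪ lowerBranch) (lower t) (lower u) := fun ε hε => by
  obtain ⟨t', ⟨htt', ht'u⟩, hclose⟩ := exists_mem_Ioo_dist_upper_lt ht htu hε
  refine ⟨lower t', lower_mem (ht.trans htt'), lower u, lower_mem (ht.trans htu), ?_,
    by rwa [dist_self], ?_⟩
  · rwa [dist_lower_lower]
  · rw [dist_lower_lower, dist_lower_lower]
    exact dist_upper_lt_of_lt_of_lt ht htt' ht'u

theorem hasCloserPairsNearby_upper_lower {t u : ℝ} (ht : 0 < t) (hu : 0 < u) :
    HasCloserPairsNearby (upperBranch ∪ lowerBranch) (upper t) (lower u) := fun ε hε => by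
  have hnear_t := ((continuousAt_upper ht.ne').tendsto.comp
    ((continuous_const_add t).tendsto' 0 t (add_zero t))).eventually (Metric.ball_mem_nhds _ hε)
  have hnear_u := ((continuousAt_lower hu.ne').tendsto.comp
    ((continuous_const_add u).tendsto' 0 u (add_zero u))).eventually (Metric.ball_mem_nhds _ hε)
  obtain ⟨h, ⟨hclose_t, hclose_u⟩, hh⟩ :=
    (((hnear_t.and hnear_u).filter_mono nhdsWithin_le_nhds).and
      (self_mem_nhdsWithin (s := Ioi 0))).exists
  exact ⟨upper (t + h), upper_mem (by positivity), lower (u + h), lower_mem (by positivity),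
    Metric.mem_ball'.mp hclose_t, Metric.mem_ball'.mp hclose_u, dist_upper_lower_add_lt ht hu hh⟩

theorem hasCloserPairsNearby_of_ne {p q : EuclideanSpace ℝ (Fin 2)}
    (hp : p ∈ upperBranch ∪ lowerBranch) (hq : q ∈ upperBranch ∪ lowerBranch)
    (hpq : p ≠ q) :
    HasCloserPairsNearby (upperBranch ∪ lowerBranch) p q := by
  rcases hp with ⟨t, ht, rfl⟩ | ⟨t, ht, rfl⟩ <;>
    rcases hq with ⟨u, hu, rfl⟩ | ⟨u, hu, rfl⟩
  · rcases lt_or_gt_of_ne (ne_of_apply_ne upper hpq) with htu | hut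
    · exact hasCloserPairsNearby_upper_upper ht htu
    · exact (hasCloserPairsNearby_upper_upper hu hut).symm
  · exact hasCloserPairsNearby_upper_lower ht hu
  · exact (hasCloserPairsNearby_upper_lower hu ht).symm
  · rcases lt_or_gt_of_ne (ne_of_apply_ne lower hpq) with htu | hut
    · exact hasCloserPairsNearby_lower_lower ht htu
    · exact (hasCloserPairsNearby_lower_lower hu hut).symm

theorem not_isLocMinVal_of_pos {m : ℝ} (hm : 0 < m) :
    ¬ IsLocMinVal ↥(upperBranch ∪ lowerBranch) m := by
  rintro ⟨a, b, rfl, hmin⟩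
  have hab : (a : EuclideanSpace ℝ (Fin 2)) ≠ b := Subtype.coe_ne_coe.mpr (dist_pos.mp hm)
  exact (hasCloserPairsNearby_of_ne a.2 b.2 hab).not_locMinPair hmin

theorem sInf_dist_upperBranch_lowerBranch :
    sInf {d : ℝ | ∃ p ∈ upperBranch, ∃ q ∈ lowerBranch, dist p q = d} = 2 := by
  refine csInf_eq_of_forall_ge_of_forall_gt_exists_lt
    ⟨_, upper 1, ⟨1, one_pos, rfl⟩, lower 1, ⟨1, one_pos, rfl⟩, rfl⟩ ?_ fun w hw => ?_
  · rintro _ ⟨p, hp, q, hq, rfl⟩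
    exact (two_lt_dist_of_mem hp hq).le
  · obtain ⟨t, ht, hlt⟩ := exists_dist_upper_lower_lt hw
    exact ⟨_, ⟨upper t, ⟨t, ht, rfl⟩, lower t, ⟨t, ht, rfl⟩, rfl⟩, hlt⟩

theorem isPathConnected_upperBranch : IsPathConnected upperBranch := by
  have h : upperBranch = upper '' Ioi 0 := by
    ext p
    simp [upperBranch, eq_comm]
  rw [h]
  exact ((convex_Ioi 0).isPathConnected nonempty_Ioi).image'
    fun t ht => (continuousAt_upper (ne_of_gt ht)).continuousWithinAt

theorem isPathConnected_lowerBranch : IsPathConnected lowerBranch := by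
  have h : lowerBranch = lower '' Ioi 0 := by
    ext p
    simp [lowerBranch, eq_comm]
  rw [h]
  exact ((convex_Ioi 0).isPathConnected nonempty_Ioi).image'
    fun t ht => (continuousAt_lower (ne_of_gt ht)).continuousWithinAt

theorem eqvGen_dist_lt_of_two_lt {s : ℝ} (hs : 2 < s) (p q : ↥(upperBranch ∪ lowerBranch)) :
    Relation.EqvGen (fun a b : ↥(upperBranch ∪ lowerBranch) => dist a b < s) p q := by
  obtain ⟨T, hT, hTs⟩ := exists_dist_upper_lower_lt hs
  have hU := (isPathConnected_upperBranch.preimage_coe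
    (U := upperBranch ∪ lowerBranch) subset_union_left).isConnected.isPreconnected
  have hL := (isPathConnected_lowerBranch.preimage_coe
    (U := upperBranch ∪ lowerBranch) subset_union_right).isConnected.isPreconnected
  have hub : ∀ x : ↥(upperBranch ∪ lowerBranch),
      Relation.EqvGen (fun a b => dist a b < s) x ⟨upper T, upper_mem hT⟩ := by
    rintro ⟨x, hx | hx⟩
    · exact hU.eqvGen_dist_lt (by linarith) hx ⟨T, hT, rfl⟩
    · refine (hL.eqvGen_dist_lt (y := ⟨lower T, lower_mem hT⟩) (by linarith) hx
        ⟨T, hT, rfl⟩).trans _ _ _ (.rel _ _ ?_)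
      rwa [Subtype.dist_eq, dist_comm]
  exact (hub p).trans _ _ _ (hub q).symm

end HyperbolaBranches

open HyperbolaBranches in
/-- the non-compact example `X = graph(1 + 1/x) ∪ graph(−1 − 1/x)` in the
Euclidean plane.  Its distance function has no positive local minimum value, the infimum
of distances between the two graphs equals `2` but is not attained (all such distances
exceed `2`), and for the chain relation `∼_s` the two graphs lie in distinct classes for
`s ≤ 2` but in a single class for `s > 2`; so `2` is a critical value of zero-dimensional
persistence which is not a local minimum value of `d`. -/
theorem stmt_17 :
    ∀ F Gr : Set (EuclideanSpace ℝ (Fin 2)),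
      F = {p | ∃ t : ℝ, 0 < t ∧ p = !₂[t, 1 + 1 / t]} →
      Gr = {p | ∃ t : ℝ, 0 < t ∧ p = !₂[t, -1 - 1 / t]} →
      (∀ m : ℝ, 0 < m → ¬ IsLocMinVal (↥(F ∪ Gr)) m) ∧
      sInf {d : ℝ | ∃ p ∈ F, ∃ q ∈ Gr, dist p q = d} = 2 ∧
      (∀ p ∈ F, ∀ q ∈ Gr, 2 < dist p q) ∧
      (∀ s : ℝ, 0 < s → s ≤ 2 → ∀ p q : ↥(F ∪ Gr), (p : EuclideanSpace ℝ (Fin 2)) ∈ F →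
        (q : EuclideanSpace ℝ (Fin 2)) ∈ Gr →
        ¬ Relation.EqvGen (fun a b : ↥(F ∪ Gr) => dist a b < s) p q) ∧
      (∀ s : ℝ, 2 < s → ∀ p q : ↥(F ∪ Gr),
        Relation.EqvGen (fun a b : ↥(F ∪ Gr) => dist a b < s) p q) := by
  rintro F Gr rfl rfl
  refine ⟨fun m => not_isLocMinVal_of_pos, sInf_dist_upperBranch_lowerBranch,
    fun p hp q hq => two_lt_dist_of_mem hp hq, fun s _ hs p q hp hq hpq => ?_,
    fun s => eqvGen_dist_lt_of_two_lt⟩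
  have hsep : ∀ a b : ↥(upperBranch ∪ lowerBranch), ↑a ∈ upperBranch → ↑b ∉ upperBranch →
      s ≤ dist a b := fun a b ha hb => hs.trans (two_lt_dist_of_mem ha (b.2.resolve_left hb)).le
  have hq' : ↑q ∈ upperBranch := (hpq.iff_of_le_dist hsep).mp hp
  exact (two_lt_dist_of_mem hq' hq).not_ge (by simp)
end

section
/- Let (X,d) be a compact metric space and suppose b > 0 is not in the closure of the set of local minimum values of d. Then there exists ε > 0 such that for all b − ε < t ≤ s < b + ε, the inclusion Rips(X,t) ↪ Rips(X,s) induces a surjection on first simplicial homology H₁ (with any fixed coefficient group). In other words, the emergent H₁ spectrum of the open Rips filtration of X is contained in the closure of LocMin(d). -/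
/-!
Homology is additive, so it suffices to shorten one edge `(x, y)` with `d(x, y) < s` at a time.
If `t ≤ d(x, y)`, the pair is not a local minimum of `d`, so it can be moved to a nearby shorter
pair `(x', y')`; the triangles `(x, x', y)` and `(x', y', y)` have diameter `< s` and replace the
edge by the path `x → x' → y' → y`, whose outer edges are shorter than `t`. Compactness of
`{p | t ≤ d(p) ≤ d(x, y)}` makes the decrease of the middle edge uniform, so finitely many such
moves bring every edge below `t`.
-/

section Boundary

variable (V G : Type*) [AddCommGroup G]

noncomputable def bd1AddHom : ((V × V) →₀ G) →+ (V →₀ G) :=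
  Finsupp.liftAddHom fun p => Finsupp.singleAddHom p.2 - Finsupp.singleAddHom p.1

noncomputable def bd2AddHom : ((V × V × V) →₀ G) →+ ((V × V) →₀ G) :=
  Finsupp.liftAddHom fun t =>
    Finsupp.singleAddHom (t.2.1, t.2.2) - Finsupp.singleAddHom (t.1, t.2.2) +
      Finsupp.singleAddHom (t.1, t.2.1)

variable {V G}

theorem bd1_eq_bd1AddHom (c : (V × V) →₀ G) : bd1 G c = bd1AddHom V G c := rfl

theorem bd2_eq_bd2AddHom (w : (V × V × V) →₀ G) : bd2 G w = bd2AddHom V G w := rfl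

theorem bd1_sub (c c' : (V × V) →₀ G) : bd1 G (c - c') = bd1 G c - bd1 G c' :=
  map_sub (bd1AddHom V G) c c'

theorem bd2_add (w w' : (V × V × V) →₀ G) : bd2 G (w + w') = bd2 G w + bd2 G w' :=
  map_add (bd2AddHom V G) w w'

theorem bd2_neg (w : (V × V × V) →₀ G) : bd2 G (-w) = -bd2 G w :=
  map_neg (bd2AddHom V G) w

theorem bd1_single (p : V × V) (g : G) :
    bd1 G (Finsupp.single p g) = Finsupp.single p.2 g - Finsupp.single p.1 g :=
  Finsupp.sum_single_index (by simp)

theorem bd2_single (t : V × V × V) (g : G) :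
    bd2 G (Finsupp.single t g) =
      Finsupp.single (t.2.1, t.2.2) g - Finsupp.single (t.1, t.2.2) g +
        Finsupp.single (t.1, t.2.1) g :=
  Finsupp.sum_single_index (by simp)

theorem bd1_bd2 (w : (V × V × V) →₀ G) : bd1 G (bd2 G w) = 0 := by
  induction w using Finsupp.induction_linear with
  | zero => rw [bd2_eq_bd2AddHom, map_zero, bd1_eq_bd1AddHom, map_zero]
  | add w w' hw hw' =>
    change bd1AddHom V G _ = 0 at hw hw' ⊢
    rw [bd2_add, map_add, hw, hw', add_zero]
  | single t g =>
    rw [bd2_single, bd1_eq_bd1AddHom]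
    simp only [map_add, map_sub, ← bd1_eq_bd1AddHom, bd1_single]
    abel

end Boundary

section Rips

variable {X : Type*} [MetricSpace X] {G : Type*} [AddCommGroup G]

def IsRipsChain (r : ℝ) (c : (X × X) →₀ G) : Prop :=
  ∀ p ∈ c.support, dist p.1 p.2 < r

variable (G) in
/-- For a cycle `c` at scale `s`, this says that its class lies in the image of
`H₁(Rips(X, t)) → H₁(Rips(X, s))`. -/
def RipsHomologousToScale (s t : ℝ) (c : (X × X) →₀ G) : Prop :=
  ∃ c', IsRipsChain t c' ∧ RipsHomologous G s c c'

theorem RipsHomologous.refl (s : ℝ) (c : (X × X) →₀ G) : RipsHomologous G s c c :=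
  ⟨0, by simp, by simp [bd2_eq_bd2AddHom]⟩

theorem RipsHomologous.add {s : ℝ} {c₁ c₁' c₂ c₂' : (X × X) →₀ G}
    (h₁ : RipsHomologous G s c₁ c₁') (h₂ : RipsHomologous G s c₂ c₂') :
    RipsHomologous G s (c₁ + c₂) (c₁' + c₂') := by
  classical
  obtain ⟨w₁, hw₁, he₁⟩ := h₁
  obtain ⟨w₂, hw₂, he₂⟩ := h₂
  refine ⟨w₁ + w₂, fun t ht => ?_, by rw [bd2_add, ← he₁, ← he₂]; abel⟩
  rcases Finset.mem_union.1 (Finsupp.support_add ht) with ht | ht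
  exacts [hw₁ t ht, hw₂ t ht]

theorem RipsHomologous.trans {s : ℝ} {c c' c'' : (X × X) →₀ G}
    (h : RipsHomologous G s c c') (h' : RipsHomologous G s c' c'') :
    RipsHomologous G s c c'' := by
  obtain ⟨w, hw, he⟩ := h.add h'
  exact ⟨w, hw, by rw [← he]; abel⟩

theorem RipsHomologous.bd1_eq {s : ℝ} {c c' : (X × X) →₀ G} (h : RipsHomologous G s c c') :
    bd1 G c = bd1 G c' := by
  obtain ⟨w, -, he⟩ := h
  rw [← sub_eq_zero, ← bd1_sub, he, bd1_bd2]

/-- The witness is the pair of triangles `(x, x', y)` and `(x', y', y)`. -/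
theorem ripsHomologous_single_path {s : ℝ} {x x' y' y : X} (g : G)
    (hxx' : dist x x' < s) (hxy : dist x y < s) (hx'y : dist x' y < s)
    (hx'y' : dist x' y' < s) (hy'y : dist y' y < s) :
    RipsHomologous G s (Finsupp.single (x, y) g)
      (Finsupp.single (x, x') g + Finsupp.single (x', y') g + Finsupp.single (y', y) g) := by
  classical
  refine ⟨-(Finsupp.single (x, x', y) g + Finsupp.single (x', y', y) g), fun t ht => ?_, ?_⟩
  · rw [Finsupp.support_neg] at ht
    rcases Finset.mem_union.1 (Finsupp.support_add ht) with ht | ht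
    · obtain rfl := Finset.mem_singleton.1 (Finsupp.support_single_subset ht)
      exact ⟨hxx', hxy, hx'y⟩
    · obtain rfl := Finset.mem_singleton.1 (Finsupp.support_single_subset ht)
      exact ⟨hx'y', hx'y, hy'y⟩
  · rw [bd2_neg, bd2_add, bd2_single, bd2_single]
    abel

namespace RipsHomologousToScale

variable {s t : ℝ}

theorem of_isRipsChain {c : (X × X) →₀ G} (hc : IsRipsChain t c) :
    RipsHomologousToScale G s t c :=
  ⟨c, hc, .refl s c⟩

theorem single {x y : X} (hxy : dist x y < t) (g : G) :
    RipsHomologousToScale G s t (Finsupp.single (x, y) g) :=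
  of_isRipsChain fun _ hp => Finset.mem_singleton.1 (Finsupp.support_single_subset hp) ▸ hxy

theorem zero : RipsHomologousToScale G s t (0 : (X × X) →₀ G) :=
  of_isRipsChain fun _ hp => absurd hp (Finsupp.notMem_support_iff.2 rfl)

theorem add {c₁ c₂ : (X × X) →₀ G} (h₁ : RipsHomologousToScale G s t c₁)
    (h₂ : RipsHomologousToScale G s t c₂) : RipsHomologousToScale G s t (c₁ + c₂) := by
  classical
  obtain ⟨c₁', hc₁', hh₁⟩ := h₁
  obtain ⟨c₂', hc₂', hh₂⟩ := h₂
  refine ⟨c₁' + c₂', fun p hp => ?_, hh₁.add hh₂⟩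
  rcases Finset.mem_union.1 (Finsupp.support_add hp) with hp | hp
  exacts [hc₁' p hp, hc₂' p hp]

theorem of_ripsHomologous {c c' : (X × X) →₀ G} (hh : RipsHomologous G s c c')
    (h : RipsHomologousToScale G s t c') : RipsHomologousToScale G s t c :=
  let ⟨c'', hc'', hh'⟩ := h
  ⟨c'', hc'', hh.trans hh'⟩

end RipsHomologousToScale

end Rips

section Descent

variable {X : Type*} [MetricSpace X] {G : Type*} [AddCommGroup G]

/-- The pairs that can be moved by less than `δ` in each coordinate to a pair shorter by more
than `1 / (n + 1)` form an increasing sequence of open sets, which covers the compact set of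
non-minimal pairs with length in `[t, s']`; one of them already covers it. -/
theorem exists_uniform_descent [CompactSpace X] {t s' δ : ℝ} (hδ : 0 < δ)
    (hnl : ∀ x y : X, t ≤ dist x y → dist x y ≤ s' → ¬ LocMinPair x y) :
    ∃ η > 0, ∀ x y : X, t ≤ dist x y → dist x y ≤ s' →
      ∃ x' y', dist x x' < δ ∧ dist y y' < δ ∧ dist x' y' + η < dist x y := by
  set U : ℕ → Set (X × X) := fun n => ⋃ q : X × X,
    {p | dist p.1 q.1 < δ ∧ dist p.2 q.2 < δ ∧ dist q.1 q.2 + 1 / (n + 1) < dist p.1 p.2}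
  have hK : IsCompact ((fun p : X × X => dist p.1 p.2) ⁻¹' Set.Icc t s') :=
    (isClosed_Icc.preimage continuous_dist).isCompact
  have hUo : ∀ n, IsOpen (U n) := fun n => isOpen_iUnion fun q =>
    (isOpen_lt (by fun_prop) continuous_const).and <|
      (isOpen_lt (by fun_prop) continuous_const).and (isOpen_lt continuous_const (by fun_prop))
  have hcover : (fun p : X × X => dist p.1 p.2) ⁻¹' Set.Icc t s' ⊆ ⋃ n, U n := by
    rintro ⟨x, y⟩ ⟨h₁, h₂⟩
    have hx := hnl x y h₁ h₂
    simp only [LocMinPair, not_exists, not_and, not_forall, not_le] at hx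
    obtain ⟨x', y', hx', hy', hlt⟩ := hx δ hδ
    obtain ⟨n, hn⟩ := exists_nat_one_div_lt (sub_pos.2 hlt)
    exact Set.mem_iUnion.2 ⟨n, Set.mem_iUnion.2 ⟨(x', y'), hx', hy', by linarith⟩⟩
  have hmono : Monotone U := fun m n hmn => Set.iUnion_mono fun q p ⟨h₁, h₂, h₃⟩ =>
    ⟨h₁, h₂, lt_of_le_of_lt (by gcongr) h₃⟩
  obtain ⟨n, hn⟩ := hK.elim_directed_cover U hUo hcover hmono.directed_le
  refine ⟨1 / (n + 1), by positivity, fun x y h₁ h₂ => ?_⟩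
  obtain ⟨q, hq⟩ := Set.mem_iUnion.1 (hn (show (x, y) ∈ _ from ⟨h₁, h₂⟩))
  exact ⟨q.1, q.2, hq⟩

theorem RipsHomologousToScale.single_of_forall_not_locMinPair [CompactSpace X] {s t : ℝ}
    (ht : 0 < t) (hnl : ∀ x y : X, t ≤ dist x y → dist x y < s → ¬ LocMinPair x y)
    {x y : X} (hxy : dist x y < s) (g : G) :
    RipsHomologousToScale G s t (Finsupp.single (x, y) g) := by
  set s' := dist x y
  set δ := min t (s - s')
  have hδt : δ ≤ t := min_le_left _ _
  have hδs : δ ≤ s - s' := min_le_right _ _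
  have hs' : 0 ≤ s' := dist_nonneg
  obtain ⟨η, hη, hdesc⟩ := exists_uniform_descent (lt_min ht (sub_pos.2 hxy))
    fun x y h₁ h₂ => hnl x y h₁ (h₂.trans_lt hxy)
  suffices key : ∀ n : ℕ, ∀ x y : X, dist x y ≤ s' → dist x y < t + n * η →
      RipsHomologousToScale G s t (Finsupp.single (x, y) g) by
    obtain ⟨n, hn⟩ := exists_nat_gt (s' / η)
    exact key n x y le_rfl (by linarith [(div_lt_iff₀ hη).1 hn])
  intro n
  induction n with
  | zero => exact fun x y _ h => .single (by simpa using h) g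
  | succ n ih =>
    intro x y h₁ h₂
    obtain hlt | hge := lt_or_ge (dist x y) t
    · exact .single hlt g
    obtain ⟨x', y', hx, hy, hd⟩ := hdesc x y hge h₁
    rw [dist_comm] at hy
    have hx'y : dist x' y < s := by
      linarith [dist_triangle x' x y, dist_comm x x']
    have hpath := ripsHomologous_single_path g (by linarith) (h₁.trans_lt hxy) hx'y
      (by linarith) (by linarith : dist y' y < s)
    push_cast at h₂
    have hmiddle := ih x' y' (by linarith) (by linarith)
    exact .of_ripsHomologous hpath
      (((single (hx.trans_le hδt) g).add hmiddle).add (single (hy.trans_le hδt) g))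

theorem ripsHomologousToScale_of_isRipsChain [CompactSpace X] {s t : ℝ} (ht : 0 < t)
    (hnl : ∀ x y : X, t ≤ dist x y → dist x y < s → ¬ LocMinPair x y)
    {α : (X × X) →₀ G} (hα : IsRipsChain s α) : RipsHomologousToScale G s t α := by
  rw [← Finsupp.sum_single α]
  exact Finset.sum_induction _ _ (fun _ _ => RipsHomologousToScale.add) .zero
    fun p hp => .single_of_forall_not_locMinPair ht hnl (hα p hp) _

end Descent

/-- if `b > 0` is not in the closure of the set of local minimum values of
`d`, then on some interval around `b` all inclusion-induced maps on `H₁` of the open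
Rips filtration are surjective: every `1`-cycle at scale `s` is homologous at scale `s`
to a `1`-cycle at scale `t`, for `b - ε < t ≤ s < b + ε`.  Hence the emergent `H₁`
spectrum is contained in the closure of `LocMin(d)`. -/
theorem stmt_19 {X : Type*} [MetricSpace X] [CompactSpace X] (G : Type*)
    [AddCommGroup G] (b : ℝ) (hb : 0 < b)
    (hbn : b ∉ closure {m : ℝ | IsLocMinVal X m}) :
    ∃ ε > 0, ∀ t s : ℝ, b - ε < t → t ≤ s → s < b + ε →
      ∀ α : (X × X) →₀ G, IsRipsCycle s α →
        ∃ α' : (X × X) →₀ G, IsRipsCycle t α' ∧ RipsHomologous G s α α' := by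
  obtain ⟨ε, hε, hfar⟩ : ∃ ε > 0, ∀ m, IsLocMinVal X m → ε ≤ dist b m := by
    simpa [Metric.mem_closure_iff] using hbn
  refine ⟨min ε b, lt_min hε hb, fun t s hbt hts hsb α hα => ?_⟩
  have hεb := min_le_left ε b
  have hnl : ∀ x y : X, t ≤ dist x y → dist x y < s → ¬ LocMinPair x y := by
    intro x y h₁ h₂ hmin
    have hfar_xy := hfar _ ⟨x, y, rfl, hmin⟩
    rw [Real.dist_eq] at hfar_xy
    exact (abs_sub_lt_iff.2 ⟨by linarith, by linarith⟩).not_ge hfar_xy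
  obtain ⟨α', hα', hhom⟩ :=
    ripsHomologousToScale_of_isRipsChain (by linarith [min_le_right ε b]) hnl hα.1
  exact ⟨α', ⟨hα', hhom.bd1_eq.symm.trans hα.2⟩, hhom⟩
end
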